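/- For real numbers a₁, a₂ with a₂ ≠ 2a₁, let Γ(a₁,a₂) ⊆ ℝ² be the union of the segments [(0,0),(1,a₁)] and [(1,a₁),(2,a₂)], let R(Γ(a₁,a₂)) be the minimum over (a,b) ∈ ℝ² of (0 − b)² + (a₁ − a − b)² + (a₂ − 2a − b)², and let ℐ(Γ(a₁,a₂)) = 2ℓ/δ, where ℓ = √(a₁²+1) + √((a₂−a₁)²+1) and δ is the one-dimensional Hausdorff measure of the frontier of the convex hull of Γ(a₁,a₂). For the four curves Γ₁ = Γ(1,0), Γ₂ = Γ(0,3), Γ₃ = Γ(2,0), Γ₄ = Γ(0,5), one has R(Γ₁) = 2/3, R(Γ₂) = 3/2, R(Γ₃) = 8/3, R(Γ₄) = 25/6, ℐ(Γ₁) = 2√2/(1+√2), ℐ(Γ₂) = (2+2√10)/(1+√10+√13), ℐ(Γ₃) = 2√5/(1+√5), ℐ(Γ₄) = (2+2√26)/(1+√26+√29), and the strict inequalities R(Γ₁) < R(Γ₂) < R(Γ₃) < R(Γ₄) and ℐ(Γ₄) < ℐ(Γ₂) < ℐ(Γ₁) < ℐ(Γ₃) hold; hence residual variance and inconstancy are not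 comparable. -/

import Mathlib

noncomputable section
open MeasureTheory Real Set
open scoped ENNReal

/-- The point `(x, y)` of the Euclidean plane. -/
def pt (x y : ℝ) : EuclideanSpace ℝ (Fin 2) := WithLp.toLp 2 ![x, y]

/-- The two-segment curve `Γ(a₁,a₂)` joining `(0,0)` to `(1,a₁)` to `(2,a₂)`. -/
def twoSeg (a₁ a₂ : ℝ) : Set (EuclideanSpace ℝ (Fin 2)) :=
  segment ℝ (pt 0 0) (pt 1 a₁) ∪ segment ℝ (pt 1 a₁) (pt 2 a₂)

/-- The residual variance `R(Γ(a₁,a₂))` of the data points `(0,0)`, `(1,a₁)`, `(2,a₂)`: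
the minimum over `(a,b) ∈ ℝ²` of the sum of squared residuals (divided by `n − 2 = 1`). -/
def resVar (a₁ a₂ : ℝ) : ℝ :=
  sInf (Set.range fun p : ℝ × ℝ =>
    (0 - p.2) ^ 2 + (a₁ - p.1 - p.2) ^ 2 + (a₂ - 2 * p.1 - p.2) ^ 2)

/-- The inconstancy `ℐ(Γ(a₁,a₂)) = 2ℓ/δ` of the two-segment curve `Γ(a₁,a₂)`, where
`ℓ = √(a₁²+1) + √((a₂−a₁)²+1)` is its length and `δ` is the one-dimensional Hausdorff
measure of the frontier of its convex hull. -/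
def incon (a₁ a₂ : ℝ) : ℝ :=
  2 * (Real.sqrt (a₁ ^ 2 + 1) + Real.sqrt ((a₂ - a₁) ^ 2 + 1))
    / (μH[1] (frontier (convexHull ℝ (twoSeg a₁ a₂)))).toReal

/-! The residual variance of three equally spaced points is, by completing the square, the
squared second difference over six: `R(Γ(a₁,a₂)) = (2a₁ - a₂)² / 6`. For `a₂ ≠ 2a₁` the three
vertices are affinely independent, so the convex hull of `Γ(a₁,a₂)` is a nondegenerate triangle;
its frontier is the union of the three edges, which pairwise meet in a single vertex, so `δ` is
the perimeter. The resulting closed forms are compared with rational bounds on square roots. -/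

namespace AffineBasis

variable {ι R E : Type*} [Field R] [LinearOrder R] [IsStrictOrderedRing R]
  [AddCommGroup E] [Module R E]

theorem convexHull_image_eq [Fintype ι] (b : AffineBasis ι R E) (s : Set ι) :
    convexHull R (b '' s) = {x | (∀ i, 0 ≤ b.coord i x) ∧ ∀ i ∉ s, b.coord i x = 0} := by
  classical
  apply Subset.antisymm
  · refine convexHull_min ?_ ?_
    · rintro _ ⟨j, hj, rfl⟩
      refine ⟨fun i => ?_, fun i hi => b.coord_apply_ne (ne_of_mem_of_not_mem hj hi).symm⟩
      rw [b.coord_apply]; split_ifs <;> norm_num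
    · have hnonneg := b.convexHull_eq_nonneg_coord ▸ convex_convexHull R (range b)
      convert hnonneg.inter <| convex_iInter fun i => convex_iInter fun (_ : i ∉ s) =>
        (convex_singleton (0 : R)).affine_preimage (b.coord i) using 1
      ext; simp
  · rintro x ⟨hnonneg, hzero⟩
    -- `x = ∑ i, b.coord i x • b i`, and the terms with `i ∉ s` vanish.
    rw [← b.linear_combination_coord_eq_self x, ← Finset.sum_filter_of_ne (p := (· ∈ s))
      fun i _ hi => by_contra fun his => hi (by rw [hzero i his, zero_smul])]
    refine (convex_convexHull R _).sum_mem (fun i _ => hnonneg i) ?_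
      fun i hi => subset_convexHull R _ ⟨i, (Finset.mem_filter.mp hi).2, rfl⟩
    rw [Finset.sum_filter_of_ne fun i _ hi => by_contra fun his => hi (hzero i his),
      b.sum_coord_apply_eq_one]

theorem convexHull_image_inter [Fintype ι] (b : AffineBasis ι R E) (s t : Set ι) :
    convexHull R (b '' (s ∩ t)) = convexHull R (b '' s) ∩ convexHull R (b '' t) := by
  ext x
  simp only [convexHull_image_eq, mem_inter_iff, mem_ofPred_eq, not_and_or]
  grind

theorem frontier_convexHull {E : Type*} [NormedAddCommGroup E] [NormedSpace ℝ E] [Fintype ι]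
    (b : AffineBasis ι ℝ E) :
    frontier (convexHull ℝ (range b)) = ⋃ i, convexHull ℝ (b '' {i}ᶜ) := by
  have : FiniteDimensional ℝ E := b.finiteDimensional
  rw [frontier, ((finite_range b).isCompact_convexHull ℝ).isClosed.closure_eq,
    b.interior_convexHull, b.convexHull_eq_nonneg_coord]
  ext x
  simp only [convexHull_image_eq, mem_sdiff, mem_iUnion, mem_compl_singleton_iff, not_not,
    mem_ofPred_eq, forall_eq, not_forall, not_lt]
  exact ⟨fun ⟨h, i, hi⟩ => ⟨i, h, hi.antisymm (h i)⟩, fun ⟨i, h, hi⟩ => ⟨h, i, hi.le⟩⟩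

theorem hausdorffMeasure_frontier_convexHull_fin_three {E : Type*} [NormedAddCommGroup E]
    [NormedSpace ℝ E] [MeasurableSpace E] [BorelSpace E] (b : AffineBasis (Fin 3) ℝ E) :
    μH[1] (frontier (convexHull ℝ (range b))) =
      edist (b 1) (b 2) + edist (b 0) (b 2) + edist (b 0) (b 1) := by
  have : NullSingletonClass (μH[1] : Measure E) := Measure.nullSingletonClass_hausdorff E one_pos
  have facet {i j k : Fin 3} (h : {i}ᶜ = ({j, k} : Set (Fin 3))) :
      μH[1] (convexHull ℝ (b '' {i}ᶜ)) = edist (b j) (b k) := by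
    rw [h, image_pair, convexHull_pair, hausdorffMeasure_segment]
  have edges_meet_in_vertex :
      Pairwise (Function.onFun (AEDisjoint μH[1]) fun i => convexHull ℝ (b '' {i}ᶜ)) := by
    intro i j hij
    have : ({i}ᶜ ∩ {j}ᶜ : Set (Fin 3)).Subsingleton := by
      intro k hk l hl
      simp only [mem_inter_iff, mem_compl_singleton_iff] at hk hl
      omega
    rw [Function.onFun, AEDisjoint, ← convexHull_image_inter, (this.image b).convex.convexHull_eq]
    exact Set.Subsingleton.measure_zero (this.image b) _
  rw [frontier_convexHull, measure_iUnion₀ edges_meet_in_vertex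
    fun _ => ((toFinite _).isCompact_convexHull ℝ).isClosed.measurableSet.nullMeasurableSet,
    tsum_fintype, Fin.sum_univ_three, facet (j := 1) (k := 2), facet (j := 0) (k := 2),
    facet (j := 0) (k := 1)]
  all_goals ext l; fin_cases l <;> simp

end AffineBasis

theorem convexHull_segment_union_segment {𝕜 E : Type*} [Field 𝕜] [LinearOrder 𝕜]
    [IsStrictOrderedRing 𝕜] [AddCommGroup E] [Module 𝕜 E] (x y z : E) :
    convexHull 𝕜 (segment 𝕜 x y ∪ segment 𝕜 y z) = convexHull 𝕜 {x, y, z} := by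
  rw [← convexHull_pair, ← convexHull_pair, convexHull_convexHull_union_left,
    convexHull_convexHull_union_right, insert_union, singleton_union, insert_eq_of_mem
    (mem_insert y {z})]

theorem hausdorffMeasure_frontier_convexHull_triangle {E : Type*} [NormedAddCommGroup E]
    [NormedSpace ℝ E] [MeasurableSpace E] [BorelSpace E] [FiniteDimensional ℝ E]
    (hE : Module.finrank ℝ E = 2) {p : Fin 3 → E} (hp : AffineIndependent ℝ p) :
    μH[1] (frontier (convexHull ℝ (range p))) =
      edist (p 1) (p 2) + edist (p 0) (p 2) + edist (p 0) (p 1) :=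
  AffineBasis.hausdorffMeasure_frontier_convexHull_fin_three
    ⟨p, hp, hp.affineSpan_eq_top_iff_card_eq_finrank_add_one.mpr (by simp [hE])⟩

theorem dist_pt (x y x' y' : ℝ) :
    dist (pt x y) (pt x' y') = √((x - x') ^ 2 + (y - y') ^ 2) := by
  simp [EuclideanSpace.dist_eq, pt, Real.dist_eq, sq_abs]

theorem affineIndependent_pt {x₀ y₀ x₁ y₁ x₂ y₂ : ℝ}
    (h : (x₁ - x₀) * (y₂ - y₀) - (x₂ - x₀) * (y₁ - y₀) ≠ 0) :
    AffineIndependent ℝ ![pt x₀ y₀, pt x₁ y₁, pt x₂ y₂] := by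
  rw [affineIndependent_iff_not_collinear_set, collinear_iff_of_mem (mem_insert _ _)]
  rintro ⟨v, hv⟩
  obtain ⟨r, hr⟩ := hv (pt x₁ y₁) (by simp)
  obtain ⟨s, hs⟩ := hv (pt x₂ y₂) (by simp)
  have hx₁ : x₁ = r * v 0 + x₀ := by simpa [pt] using congrArg (· 0) hr
  have hy₁ : y₁ = r * v 1 + y₀ := by simpa [pt] using congrArg (· 1) hr
  have hx₂ : x₂ = s * v 0 + x₀ := by simpa [pt] using congrArg (· 0) hs
  have hy₂ : y₂ = s * v 1 + y₀ := by simpa [pt] using congrArg (· 1) hs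
  subst hx₁ hy₁ hx₂ hy₂
  exact h (by ring)

theorem resVar_eq (a₁ a₂ : ℝ) : resVar a₁ a₂ = (2 * a₁ - a₂) ^ 2 / 6 := by
  have key (a b : ℝ) : (0 - b) ^ 2 + (a₁ - a - b) ^ 2 + (a₂ - 2 * a - b) ^ 2 =
      (2 * a₁ - a₂) ^ 2 / 6 + 3 * (a + b - a₂ / 2 - (2 * a₁ - a₂) / 6) ^ 2
        + 2 * (a - a₂ / 2) ^ 2 := by
    ring
  refine IsLeast.csInf_eq ⟨⟨(a₂ / 2, (2 * a₁ - a₂) / 6), by simp only [key]; ring⟩, ?_⟩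
  rintro _ ⟨⟨a, b⟩, rfl⟩
  simp only [key]
  linarith [sq_nonneg (a + b - a₂ / 2 - (2 * a₁ - a₂) / 6), sq_nonneg (a - a₂ / 2)]

theorem incon_eq {a₁ a₂ : ℝ} (h : 2 * a₁ - a₂ ≠ 0) :
    incon a₁ a₂ = 2 * (√(a₁ ^ 2 + 1) + √((a₂ - a₁) ^ 2 + 1)) /
      (√((a₂ - a₁) ^ 2 + 1) + √(a₂ ^ 2 + 4) + √(a₁ ^ 2 + 1)) := by
  have hind : AffineIndependent ℝ ![pt 0 0, pt 1 a₁, pt 2 a₂] :=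
    affineIndependent_pt (by contrapose! h; linarith)
  rw [incon, twoSeg, convexHull_segment_union_segment, ← Set.singleton_union,
    ← Matrix.range_cons_cons_empty _ _ ![], ← Matrix.range_cons,
    hausdorffMeasure_frontier_convexHull_triangle finrank_euclideanSpace_fin hind,
    ENNReal.toReal_add (by finiteness) (edist_ne_top _ _),
    ENNReal.toReal_add (edist_ne_top _ _) (edist_ne_top _ _), ← dist_edist, ← dist_edist,
    ← dist_edist]
  simp only [Matrix.cons_val, dist_pt]
  ring_nf

theorem incon_zero_right {a : ℝ} (ha : a ≠ 0) :
    incon a 0 = 2 * √(a ^ 2 + 1) / (1 + √(a ^ 2 + 1)) := by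
  have h4 : √4 = 2 := by
    rw [show (4 : ℝ) = 2 ^ 2 by norm_num, Real.sqrt_sq zero_le_two]
  rw [incon_eq (by simpa using ha), zero_sub, neg_sq]
  norm_num [h4]
  rw [div_eq_div_iff (by positivity) (by positivity)]
  ring

theorem incon_zero_left {a : ℝ} (ha : a ≠ 0) :
    incon 0 a = (2 + 2 * √(a ^ 2 + 1)) / (1 + √(a ^ 2 + 1) + √(a ^ 2 + 4)) := by
  rw [incon_eq (by simpa using ha)]
  norm_num
  ring

theorem incon_zero_right_lt {a b : ℝ} (ha : a ≠ 0) (hab : a ^ 2 < b ^ 2) :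
    incon a 0 < incon b 0 := by
  have hb : b ≠ 0 := by rintro rfl; nlinarith [sq_nonneg a]
  have hsqrt : √(a ^ 2 + 1) < √(b ^ 2 + 1) := Real.sqrt_lt_sqrt (by positivity) (by linarith)
  rw [incon_zero_right ha, incon_zero_right hb, div_lt_div_iff₀ (by positivity) (by positivity)]
  linarith

-- Cleared of denominators, this is `1 + √10 < √26`.
theorem incon_zero_three_lt_incon_one_zero : incon 0 3 < incon 1 0 := by
  have h10 : √10 < 3.17 := (Real.sqrt_lt' (by norm_num)).mpr (by norm_num)
  have h26 : (5 : ℝ) < √2 * √13 := by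
    rw [← Real.sqrt_mul zero_le_two]
    exact (Real.lt_sqrt (by norm_num)).mpr (by norm_num)
  rw [incon_zero_left (by norm_num), incon_zero_right one_ne_zero,
    div_lt_div_iff₀ (by positivity) (by positivity)]
  norm_num
  nlinarith

-- Cleared of denominators, this is `√13 + √338 < √29 + √290`, i.e. `21.99… < 22.41…`.
theorem incon_zero_five_lt_incon_zero_three : incon 0 5 < incon 0 3 := by
  have h13 : √13 < 3.61 := (Real.sqrt_lt' (by norm_num)).mpr (by norm_num)
  have h29 : (5.38 : ℝ) < √29 := (Real.lt_sqrt (by norm_num)).mpr (by norm_num)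
  have h338 : √13 * √26 < 18.39 := by
    rw [← Real.sqrt_mul (by norm_num)]
    exact (Real.sqrt_lt' (by norm_num)).mpr (by norm_num)
  have h290 : (17.02 : ℝ) < √29 * √10 := by
    rw [← Real.sqrt_mul (by norm_num)]
    exact (Real.lt_sqrt (by norm_num)).mpr (by norm_num)
  rw [incon_zero_left (by norm_num), incon_zero_left (by norm_num),
    div_lt_div_iff₀ (by positivity) (by positivity)]
  norm_num
  nlinarith

/-- Residual variance and inconstancy are not comparable: for the four curves
`Γ₁ = Γ(1,0)`, `Γ₂ = Γ(0,3)`, `Γ₃ = Γ(2,0)`, `Γ₄ = Γ(0,5)` the residual variances are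
`2/3 < 3/2 < 8/3 < 25/6` while the inconstancies satisfy `ℐ(Γ₄) < ℐ(Γ₂) < ℐ(Γ₁) < ℐ(Γ₃)`. -/
theorem resVar_incon_not_comparable :
    resVar 1 0 = 2 / 3 ∧ resVar 0 3 = 3 / 2 ∧ resVar 2 0 = 8 / 3 ∧ resVar 0 5 = 25 / 6 ∧
    incon 1 0 = 2 * Real.sqrt 2 / (1 + Real.sqrt 2) ∧
    incon 0 3 = (2 + 2 * Real.sqrt 10) / (1 + Real.sqrt 10 + Real.sqrt 13) ∧
    incon 2 0 = 2 * Real.sqrt 5 / (1 + Real.sqrt 5) ∧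
    incon 0 5 = (2 + 2 * Real.sqrt 26) / (1 + Real.sqrt 26 + Real.sqrt 29) ∧
    (resVar 1 0 < resVar 0 3 ∧ resVar 0 3 < resVar 2 0 ∧ resVar 2 0 < resVar 0 5) ∧
    (incon 0 5 < incon 0 3 ∧ incon 0 3 < incon 1 0 ∧ incon 1 0 < incon 2 0) := by
  refine ⟨by norm_num [resVar_eq], by norm_num [resVar_eq], by norm_num [resVar_eq],
    by norm_num [resVar_eq], ?_, ?_, ?_, ?_, by norm_num [resVar_eq],
    incon_zero_five_lt_incon_zero_three, incon_zero_three_lt_incon_one_zero,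
    incon_zero_right_lt one_ne_zero (by norm_num)⟩
  · rw [incon_zero_right one_ne_zero]; norm_num
  · rw [incon_zero_left (by norm_num)]; norm_num
  · rw [incon_zero_right two_ne_zero]; norm_num
  · rw [incon_zero_left (by norm_num)]; norm_num
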